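/- arXiv:1907.02369 — 3 statements merged into one kernel-verified Lean document; each statement's English description precedes it below -/
import Mathlib

section
/- For any probability distribution w on an n-element set, ‖w‖² ≥ (1/n)(1 + ‖w − u‖₁²)/1, i.e., the squared 2-norm of w is at least (1 + ‖w−u‖₁²)/n, where u is the uniform distribution. -/
/-! Cauchy–Schwarz gives `‖w - u‖₁² ≤ n ‖w - u‖₂²`, and because `∑ w = 1` the cross term
collapses: `‖w - u‖₂² = ‖w‖² - 1/n`. -/

open Finset

lemma sq_sum_abs_div_card_le_sum_sq {ι : Type*} (s : Finset ι) (f : ι → ℝ) :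
    (∑ i ∈ s, |f i|) ^ 2 / #s ≤ ∑ i ∈ s, f i ^ 2 := by
  simpa only [Nat.reduceAdd, pow_one, sq_abs] using
    pow_sum_div_card_le_sum_pow (s := s) (f := fun i => |f i|) (fun i _ => abs_nonneg (f i)) 1

lemma sum_sq_sub_inv_card_of_sum_eq_one {ι : Type*} {s : Finset ι} {w : ι → ℝ}
    (hsum : ∑ i ∈ s, w i = 1) :
    ∑ i ∈ s, (w i - 1 / #s) ^ 2 = ∑ i ∈ s, w i ^ 2 - 1 / #s := by
  have hcard : (#s : ℝ) * (1 / #s) ^ 2 = 1 / #s := by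
    rcases eq_or_ne (#s : ℝ) 0 with h | h <;> field_simp [h]
  simp only [sub_sq, sum_add_distrib, sum_sub_distrib, sum_const, nsmul_eq_mul, ← sum_mul,
    ← mul_sum, hsum]
  linarith

theorem squared_two_norm_ge_one_plus_l1_sq_general
    {n : ℕ} (w : Fin n → ℝ)
    (hsum : ∑ i, w i = 1) :
    ∑ i, (w i) ^ 2 ≥ (1 / n) * (1 + (∑ i, |w i - 1 / n|) ^ 2) := by
  have h_cauchy_schwarz := sq_sum_abs_div_card_le_sum_sq univ fun i => w i - 1 / n
  have h_dist_sq := sum_sq_sub_inv_card_of_sum_eq_one hsum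
  simp only [card_univ, Fintype.card_fin] at h_cauchy_schwarz h_dist_sq
  rw [mul_add, mul_one, one_div_mul_eq_div]
  linarith

/-- For any probability distribution `w` on an `n`-element set,
`‖w‖² ≥ (1 + ‖w − u‖₁²)/n`, where `u` is the uniform distribution. -/
theorem squared_two_norm_ge_one_plus_l1_sq
    {n : ℕ} (hn : 0 < n) (w : Fin n → ℝ)
    (hnonneg : ∀ i, 0 ≤ w i) (hsum : ∑ i, w i = 1) :
    ∑ i, (w i) ^ 2 ≥ (1 / n) * (1 + (∑ i, |w i - 1 / n|) ^ 2) :=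
  squared_two_norm_ge_one_plus_l1_sq_general w hsum
end

section
/- Let S ⊆ V and for α, β > 0 define the (α,β)-diffusion core S_{α,β} = { v ∈ S : Pr(τ_v(Sᶜ) > α·φ(S)^{-1}) ≥ β }, where τ_v(Sᶜ) is the hitting time of Sᶜ by the lazy random walk from v. Assuming Pr_{v∼π_S}(τ_v(Sᶜ) > α·φ(S)^{-1}) ≥ 1 − α/2 where π_S is the stationary distribution conditioned on S, it holds that d(S_{α,β})/d(S) > 1 − α/(2(1−β)). -/
/-!
Markov's inequality for the escape probability `1 - esc` under `π_S`: its mean is at most `α/2`,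
and every vertex outside the core escapes with probability more than `1 - β`, so the non-core
carries `π_S`-mass less than `α / (2(1 - β))`.
-/

open Finset

section WeightedMarkov

variable {ι : Type*} (s : Finset ι) (w f : ι → ℝ)

theorem sum_mul_one_sub_le_of_le_weighted_mean {a : ℝ} (hW : 0 < ∑ v ∈ s, w v)
    (h : ∑ v ∈ s, (w v / ∑ u ∈ s, w u) * f v ≥ 1 - a) :
    ∑ v ∈ s, w v * (1 - f v) ≤ a * ∑ v ∈ s, w v := by
  have hmean : ∑ v ∈ s, (w v / ∑ u ∈ s, w u) * f v = (∑ v ∈ s, w v * f v) / ∑ u ∈ s, w u := by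
    rw [sum_div]
    exact sum_congr rfl fun v _ => by ring
  rw [hmean, ge_iff_le, le_div_iff₀ hW] at h
  simp only [mul_one_sub, sum_sub_distrib]
  linarith

theorem one_sub_mul_sum_filter_lt_lt {β c : ℝ}
    (hw : ∀ v ∈ s, 0 < w v) (hf : ∀ v ∈ s, f v ≤ 1) (hc : 0 < c)
    (hsum : ∑ v ∈ s, w v * (1 - f v) ≤ c) :
    (1 - β) * ∑ v ∈ s.filter (fun v => ¬ β ≤ f v), w v < c := by
  set low := s.filter (fun v => ¬ β ≤ f v)
  rcases low.eq_empty_or_nonempty with hempty | hne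
  · simpa [hempty] using hc
  have hlow : (1 - β) * ∑ v ∈ low, w v < ∑ v ∈ low, w v * (1 - f v) := by
    rw [mul_sum]
    refine sum_lt_sum_of_nonempty hne fun v hv => ?_
    obtain ⟨hvs, hlt⟩ := mem_filter.mp hv
    nlinarith [hw v hvs, not_le.mp hlt]
  have hsub : ∑ v ∈ low, w v * (1 - f v) ≤ ∑ v ∈ s, w v * (1 - f v) :=
    sum_le_sum_of_subset_of_nonneg (filter_subset _ s) fun v hv _ =>
      mul_nonneg (hw v hv).le (sub_nonneg.mpr (hf v hv))
  linarith

end WeightedMarkov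

theorem diffusion_core_size_general
    {V : Type*}
    (S : Finset V) (deg : V → ℝ) (esc : V → ℝ)
    (α β : ℝ) (hα : 0 < α) (hβ1 : β < 1)
    (hdegpos : ∀ v ∈ S, 0 < deg v)
    (hesc1 : ∀ v, esc v ≤ 1)
    (hST : ∑ v ∈ S, (deg v / ∑ u ∈ S, deg u) * esc v ≥ 1 - α / 2)
    (hSne : S.Nonempty) :
    (∑ v ∈ S.filter (fun v => esc v ≥ β), deg v) / (∑ v ∈ S, deg v)
      > 1 - α / (2 * (1 - β)) := by
  have hD : 0 < ∑ v ∈ S, deg v := sum_pos hdegpos hSne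
  have hescape := sum_mul_one_sub_le_of_le_weighted_mean S deg esc hD hST
  have hnoncore := one_sub_mul_sum_filter_lt_lt S deg esc (β := β) hdegpos
    (fun v _ => hesc1 v) (by positivity) hescape
  have hsplit := sum_filter_add_sum_filter_not S (fun v => esc v ≥ β) deg
  rw [gt_iff_lt, sub_lt_comm, one_sub_div hD.ne', div_lt_div_iff₀ hD (by linarith)]
  nlinarith

/-- size of the `(α,β)`-diffusion core.  Here `esc v` denotes the probability
`Pr(τ_v(Sᶜ) > α·φ(S)⁻¹)` that the lazy walk from `v` stays in `S` for `α·φ(S)⁻¹` steps,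
`deg` the degree function, and the hypothesis is the Spielman–Teng escape bound
`Pr_{v∼π_S}(τ_v(Sᶜ) > α·φ(S)⁻¹) ≥ 1 − α/2`.  The conclusion:
`d(S_{α,β})/d(S) > 1 − α/(2(1−β))`. -/
theorem diffusion_core_size
    {V : Type*} [DecidableEq V]
    (S : Finset V) (deg : V → ℝ) (esc : V → ℝ)
    (α β : ℝ) (hα : 0 < α) (hβ : 0 < β) (hβ1 : β < 1)
    (hdegpos : ∀ v ∈ S, 0 < deg v)
    (hesc0 : ∀ v, 0 ≤ esc v) (hesc1 : ∀ v, esc v ≤ 1)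
    (hST : ∑ v ∈ S, (deg v / ∑ u ∈ S, deg u) * esc v ≥ 1 - α / 2)
    (hSne : S.Nonempty) :
    (∑ v ∈ S.filter (fun v => esc v ≥ β), deg v) / (∑ v ∈ S, deg v)
      > 1 - α / (2 * (1 - β)) :=
  diffusion_core_size_general S deg esc α β hα hβ1 hdegpos hesc1 hST hSne
end

section
/- Suppose a distribution v on the vertices of a graph puts mass at least γ on the diffusion core A_d of a set A ⊆ V with |A| ≤ (1+ε)n/2, and suppose that a t-step random walk started from any point of A_d stays inside A with probability at least 3/4. If γ > 2(1+ε)/3, then ‖P^t v‖² ≥ (1/n)(1 + 4(3γ/4 − (1+ε)/2)²). -/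
/-!
The walk keeps at least `3/4` of the mass that `v` puts on `Ad` inside `A`, so `P^t v` gives
`A` mass at least `3γ/4`, while the uniform distribution gives it at most `(1+ε)/2`. Hence
`P^t v` is at `ℓ₁`-distance at least `2(3γ/4 - (1+ε)/2)` from uniform, and Cauchy–Schwarz
turns an `ℓ₁`-distance `d` from uniform into `‖w‖² ≥ (1 + d²)/n`.
-/

open Finset Matrix

variable {ι : Type*} [Fintype ι]

theorem Matrix.mul_sum_le_sum_mulVec {M : Matrix ι ι ℝ} (hM : ∀ i j, 0 ≤ M i j) {v : ι → ℝ}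
    (hv : ∀ i, 0 ≤ v i) {A B : Finset ι} {c : ℝ} (hc : ∀ i ∈ B, c ≤ ∑ j ∈ A, M j i) :
    c * ∑ i ∈ B, v i ≤ ∑ j ∈ A, (M *ᵥ v) j :=
  calc c * ∑ i ∈ B, v i = ∑ i ∈ B, c * v i := mul_sum _ _ _
    _ ≤ ∑ i ∈ B, (∑ j ∈ A, M j i) * v i :=
      sum_le_sum fun i hi => mul_le_mul_of_nonneg_right (hc i hi) (hv i)
    _ ≤ ∑ i, (∑ j ∈ A, M j i) * v i :=
      sum_le_sum_of_subset_of_nonneg (subset_univ B) fun i _ _ =>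
        mul_nonneg (sum_nonneg fun j _ => hM j i) (hv i)
    _ = ∑ j ∈ A, (M *ᵥ v) j := by
      simp only [mulVec, dotProduct, sum_mul]
      exact sum_comm

theorem two_mul_sub_le_sum_abs_sub [DecidableEq ι] {f g : ι → ℝ} (hfg : ∑ i, f i = ∑ i, g i)
    (A : Finset ι) :
    2 * (∑ i ∈ A, f i - ∑ i ∈ A, g i) ≤ ∑ i, |f i - g i| := by
  have hcompl : ∑ i ∈ Aᶜ, (g i - f i) = ∑ i ∈ A, f i - ∑ i ∈ A, g i := by
    rw [← sum_compl_add_sum A f, ← sum_compl_add_sum A g] at hfg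
    rw [sum_sub_distrib]
    linarith
  calc 2 * (∑ i ∈ A, f i - ∑ i ∈ A, g i)
      = ∑ i ∈ Aᶜ, (g i - f i) + ∑ i ∈ A, (f i - g i) := by rw [hcompl, sum_sub_distrib]; ring
    _ ≤ ∑ i ∈ Aᶜ, |f i - g i| + ∑ i ∈ A, |f i - g i| := by
      gcongr with i _ i _
      · exact neg_sub (f i) (g i) ▸ neg_le_abs _
      · exact le_abs_self _
    _ = ∑ i, |f i - g i| := sum_compl_add_sum A _

theorem sum_sq_sub_inv_card {w : ι → ℝ} (hw : ∑ i, w i = 1) :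
    ∑ i, (w i - (Fintype.card ι : ℝ)⁻¹) ^ 2 = ∑ i, w i ^ 2 - (Fintype.card ι : ℝ)⁻¹ := by
  have hcard : (Fintype.card ι : ℝ) ≠ 0 := by
    rintro h
    rw [Nat.cast_eq_zero, Fintype.card_eq_zero_iff] at h
    simp at hw
  simp only [sub_sq, sum_add_distrib, sum_sub_distrib, ← sum_mul, ← mul_sum, hw, sum_const,
    card_univ, nsmul_eq_mul]
  field_simp
  ring

theorem inv_card_mul_one_add_sq_le_sum_sq {w : ι → ℝ} (hw : ∑ i, w i = 1) :
    (Fintype.card ι : ℝ)⁻¹ * (1 + (∑ i, |w i - (Fintype.card ι : ℝ)⁻¹|) ^ 2) ≤ ∑ i, w i ^ 2 := by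
  have hcard : (0 : ℝ) < Fintype.card ι := by
    rw [Nat.cast_pos, Fintype.card_pos_iff]
    by_contra h
    simp [not_nonempty_iff.1 h] at hw
  have hCS := sq_sum_le_card_mul_sum_sq (s := univ) (f := fun i => |w i - (Fintype.card ι : ℝ)⁻¹|)
  simp only [sq_abs, card_univ, sum_sq_sub_inv_card hw] at hCS
  rw [inv_mul_le_iff₀ hcard]
  nlinarith [mul_inv_cancel₀ hcard.ne']

theorem two_norm_lower_bound_far_from_expander_general
    {n : ℕ} (hn : 0 < n) (P : Matrix (Fin n) (Fin n) ℝ)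
    (hPnonneg : ∀ i j, 0 ≤ P i j)
    (hPcols : ∀ j, ∑ i, P i j = 1)
    (t : ℕ) (v : Fin n → ℝ)
    (hvnonneg : ∀ i, 0 ≤ v i) (hvsum : ∑ i, v i = 1)
    (A Ad : Finset (Fin n))
    (ε γ : ℝ)
    (hAcard : (A.card : ℝ) ≤ (1 + ε) * n / 2)
    (hmass : ∑ i ∈ Ad, v i ≥ γ)
    (hstay : ∀ i ∈ Ad, ∑ j ∈ A, (P ^ t) j i ≥ 3 / 4)
    (hγ : γ > 2 * (1 + ε) / 3) :
    ∑ j, ((P ^ t).mulVec v j) ^ 2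
      ≥ (1 / n) * (1 + 4 * (3 * γ / 4 - (1 + ε) / 2) ^ 2) := by
  have hPt : P ^ t ∈ colStochastic ℝ (Fin n) :=
    pow_mem (mem_colStochastic_iff_sum.2 ⟨hPnonneg, hPcols⟩) t
  set w := (P ^ t) *ᵥ v
  have hw_sum : ∑ j, w j = 1 := (sum_mulVec_of_mem_colStochastic hPt).trans hvsum
  have hwA : 3 * γ / 4 ≤ ∑ j ∈ A, w j :=
    calc 3 * γ / 4 ≤ 3 / 4 * ∑ i ∈ Ad, v i := by linarith
      _ ≤ ∑ j ∈ A, w j := mul_sum_le_sum_mulVec (fun _ _ => hPt.1 _ _) hvnonneg hstay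
  have huA : ∑ _j ∈ A, (n : ℝ)⁻¹ ≤ (1 + ε) / 2 := by
    rw [sum_const, nsmul_eq_mul, ← div_eq_mul_inv, div_le_iff₀ (by exact_mod_cast hn)]
    linarith
  have hdist : 2 * (3 * γ / 4 - (1 + ε) / 2) ≤ ∑ j, |w j - (n : ℝ)⁻¹| := by
    have := two_mul_sub_le_sum_abs_sub (f := w) (g := fun _ => (n : ℝ)⁻¹)
      (by simp [hw_sum, hn.ne']) A
    linarith
  have hgap : 0 ≤ 2 * (3 * γ / 4 - (1 + ε) / 2) := by linarith
  calc 1 / (n : ℝ) * (1 + 4 * (3 * γ / 4 - (1 + ε) / 2) ^ 2)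
      = (n : ℝ)⁻¹ * (1 + (2 * (3 * γ / 4 - (1 + ε) / 2)) ^ 2) := by ring
    _ ≤ (n : ℝ)⁻¹ * (1 + (∑ j, |w j - (n : ℝ)⁻¹|) ^ 2) := by gcongr
    _ ≤ ∑ j, w j ^ 2 := by
      simpa using inv_card_mul_one_add_sq_le_sum_sq hw_sum

/-- If a distribution `v` puts mass at least `γ` on the diffusion core `Ad`
of a set `A` with `|A| ≤ (1+ε)n/2`, every `t`-step walk from `Ad` stays in `A` with
probability `≥ 3/4`, and `γ > 2(1+ε)/3`, then
`‖P^t v‖² ≥ (1/n)(1 + 4(3γ/4 − (1+ε)/2)²)`. -/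
theorem two_norm_lower_bound_far_from_expander
    {n : ℕ} (hn : 0 < n) (P : Matrix (Fin n) (Fin n) ℝ)
    (hPnonneg : ∀ i j, 0 ≤ P i j)
    (hPcols : ∀ j, ∑ i, P i j = 1)
    (t : ℕ) (v : Fin n → ℝ)
    (hvnonneg : ∀ i, 0 ≤ v i) (hvsum : ∑ i, v i = 1)
    (A Ad : Finset (Fin n)) (hAdA : Ad ⊆ A)
    (ε γ : ℝ) (hε : 0 ≤ ε)
    (hAcard : (A.card : ℝ) ≤ (1 + ε) * n / 2)
    (hmass : ∑ i ∈ Ad, v i ≥ γ)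
    (hstay : ∀ i ∈ Ad, ∑ j ∈ A, (P ^ t) j i ≥ 3 / 4)
    (hγ : γ > 2 * (1 + ε) / 3) :
    ∑ j, ((P ^ t).mulVec v j) ^ 2
      ≥ (1 / n) * (1 + 4 * (3 * γ / 4 - (1 + ε) / 2) ^ 2) :=
  two_norm_lower_bound_far_from_expander_general hn P hPnonneg hPcols t v hvnonneg hvsum A Ad ε γ
    hAcard hmass hstay hγ
end
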